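/- arXiv:2204.00487 — 3 statements merged into one kernel-verified Lean document; each statement's English description precedes it below -/
import Mathlib

section
/- Let d, m be positive natural numbers, F : ℝ^d → Fin m measurable, σ > 0, and μ_x the isotropic Gaussian measure N(x, σ²I_d). Fix x ∈ ℝ^d, a class c_A : Fin m, p_A ∈ (1/2, 1], and a ∈ ℝ with Φ(a) = p_A. If μ_x {z | F z = c_A} ≥ p_A, then for every δ ∈ ℝ^d with ‖δ‖₂ < σ·a one has μ_{x+δ} {z | F z = c_A} > 1/2, and consequently μ_{x+δ} {z | F z = c_A} > μ_{x+δ} {z | F z = c} for every class c ≠ c_A. -/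
open MeasureTheory ProbabilityTheory Set
open scoped RealInnerProductSpace NNReal ENNReal

/-- The isotropic Gaussian measure `N(x, σ²I_d)` on `ℝ^d`. -/
noncomputable def gaussPi (d : ℕ) (σ : ℝ) (x : EuclideanSpace ℝ (Fin d)) :
    Measure (EuclideanSpace ℝ (Fin d)) :=
  Measure.map (MeasurableEquiv.toLp 2 (Fin d → ℝ))
    (Measure.pi fun i => gaussianReal (x i) ⟨σ ^ 2, sq_nonneg σ⟩)

/-- The standard normal cumulative distribution function `Φ`. -/
noncomputable def stdNormalCDF (t : ℝ) : ℝ :=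
  (gaussianReal 0 1 (Set.Iic t)).toReal

/-!
Write `μ_y` as the image of the standard Gaussian `γ` under `z ↦ y + σ z`. With `u = δ / σ`,
the claim becomes: if `γ B ≥ Φ a`, then the translate `γ(· - u)` gives `B` mass at least
`Φ (a - ‖u‖)`. The translate has density `exp (⟪u, z⟫ - ‖u‖² / 2)` with respect to `γ`, an
increasing function of `⟪u, z⟫`, so by the Neyman–Pearson argument the half-space
`{⟪u, z⟫ ≤ ‖u‖ a}`, of `γ`-mass exactly `Φ a`, has the least translated mass among sets of
`γ`-mass at least `Φ a`; that mass is `Φ (a - ‖u‖) > 1/2`. Every other class lies in the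
complement of the decision region of `c_A`, hence has mass `< 1/2`.
-/

open Real

lemma stdNormalCDF_zero : stdNormalCDF 0 = 1 / 2 := by
  have := nullSingletonClass_gaussianReal (μ := 0) one_ne_zero
  have hsymm : (gaussianReal 0 1).real (Iic 0)ᶜ = (gaussianReal 0 1).real (Iic 0) := by
    rw [compl_Iic, measureReal_congr Ioi_ae_eq_Ici]
    conv_lhs =>
      rw [← neg_zero, ← gaussianReal_map_neg, map_measureReal_apply (by fun_prop) measurableSet_Ici]
    simp
  rw [probReal_compl_eq_one_sub measurableSet_Iic] at hsymm
  change (gaussianReal 0 1).real (Iic 0) = 1 / 2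
  linarith

lemma half_lt_stdNormalCDF {t : ℝ} (ht : 0 < t) : 1 / 2 < stdNormalCDF t := by
  have hpos : 0 < (gaussianReal 0 1).real (Ioc 0 t) := by
    refine ENNReal.toReal_pos (fun h => ?_) (measure_ne_top _ _)
    have := gaussianReal_absolutelyContinuous' 0 one_ne_zero h
    simp at this
    linarith
  have hzero : (gaussianReal 0 1).real (Iic 0) = 1 / 2 := stdNormalCDF_zero
  change 1 / 2 < (gaussianReal 0 1).real (Iic t)
  rw [← Iic_union_Ioc_eq_Iic ht.le, measureReal_union (Iic_disjoint_Ioc le_rfl) measurableSet_Ioc]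
  linarith

/-- The Neyman–Pearson lemma. -/
lemma withDensity_apply_le_of_density_threshold {α : Type*} [MeasurableSpace α] {μ : Measure α}
    [IsFiniteMeasure μ] (R : α → ℝ≥0∞) {H E : Set α} (hH : MeasurableSet H) (hE : MeasurableSet E)
    {k : ℝ≥0∞} (hle : ∀ z ∈ H, R z ≤ k) (hge : ∀ z ∉ H, k ≤ R z) (hHE : μ H ≤ μ E) :
    μ.withDensity R H ≤ μ.withDensity R E := by
  have hdiff : μ (H \ E) ≤ μ (E \ H) := by
    rw [← measure_sdiff_add_inter H hE, ← measure_sdiff_add_inter E hH, inter_comm] at hHE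
    exact (ENNReal.add_le_add_iff_right (measure_ne_top _ _)).1 hHE
  have hHE_upper : μ.withDensity R (H \ E) ≤ k * μ (H \ E) := by
    rw [withDensity_apply _ (hH.diff hE), ← setLIntegral_const]
    exact setLIntegral_mono' (hH.diff hE) fun z hz => hle z hz.1
  have hEH_lower : k * μ (E \ H) ≤ μ.withDensity R (E \ H) := by
    rw [withDensity_apply _ (hE.diff hH), ← setLIntegral_const]
    exact setLIntegral_mono' (hE.diff hH) fun z hz => hge z hz.2
  calc μ.withDensity R H = μ.withDensity R (H \ E) + μ.withDensity R (E ∩ H) := by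
        rw [inter_comm, measure_sdiff_add_inter H hE]
    _ ≤ k * μ (H \ E) + μ.withDensity R (E ∩ H) := add_le_add_left hHE_upper _
    _ ≤ k * μ (E \ H) + μ.withDensity R (E ∩ H) := by gcongr k * ?_ + _
    _ ≤ μ.withDensity R (E \ H) + μ.withDensity R (E ∩ H) := add_le_add_left hEH_lower _
    _ = μ.withDensity R E := measure_sdiff_add_inter E hH

lemma MeasureTheory.Measure.pi_eq_withDensity_prod {ι : Type*} [Fintype ι] {X : ι → Type*}
    [∀ i, MeasurableSpace (X i)] (μ ν : ∀ i, Measure (X i)) [∀ i, IsProbabilityMeasure (μ i)]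
    [∀ i, SigmaFinite (ν i)] (f : ∀ i, X i → ℝ≥0∞) (hf : ∀ i, Measurable (f i))
    (hν : ∀ i, ν i = (μ i).withDensity (f i)) :
    Measure.pi ν = (Measure.pi μ).withDensity (fun z => ∏ i, f i (z i)) := by
  refine Measure.pi_eq fun s hs => ?_
  have hbox : (univ.pi s).indicator (fun z => ∏ i, f i (z i)) =
      fun z => ∏ i, (s i).indicator (f i) (z i) := by
    ext z
    classical
    simp only [indicator_apply, mem_univ_pi, Finset.prod_ite_zero, Finset.mem_univ, true_implies]
  rw [withDensity_apply _ (.univ_pi hs), ← lintegral_indicator (.univ_pi hs), hbox,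
    lintegral_prod_eq_prod_lintegral_of_indepFun _ _
      (iIndepFun_pi fun i => ((hf i).indicator (hs i)).aemeasurable)
      fun i => ((hf i).indicator (hs i)).comp (measurable_pi_apply i)]
  refine Finset.prod_congr rfl fun i _ => ?_
  rw [hν i, withDensity_apply _ (hs i), ← lintegral_indicator (hs i)]
  exact (measurePreserving_eval μ i).lintegral_comp ((hf i).indicator (hs i))

lemma MeasurableEquiv.map_withDensity_comp {α β : Type*} [MeasurableSpace α] [MeasurableSpace β]
    (e : α ≃ᵐ β) (μ : Measure α) (g : β → ℝ≥0∞) :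
    (μ.withDensity (g ∘ e)).map e = (μ.map e).withDensity g := by
  ext S hS
  rw [Measure.map_apply e.measurable hS, withDensity_apply _ (e.measurable hS),
    withDensity_apply _ hS, e.restrict_map, lintegral_map_equiv]
  rfl

lemma measure_lt_of_subset_compl_of_half_lt {α : Type*} [MeasurableSpace α] {μ : Measure α}
    [IsProbabilityMeasure μ] {A B : Set α} (hA : MeasurableSet A) (hBA : B ⊆ Aᶜ)
    (hhalf : 1 / 2 < μ.real A) : μ B < μ A := by
  rw [← ENNReal.toReal_lt_toReal (measure_ne_top _ _) (measure_ne_top _ _)]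
  calc μ.real B ≤ μ.real Aᶜ := measureReal_mono hBA
    _ = 1 - μ.real A := probReal_compl_eq_one_sub hA
    _ < μ.real A := by linarith

lemma gaussianReal_add_eq_withDensity (m b : ℝ) {v : ℝ≥0} (hv : v ≠ 0) :
    gaussianReal (m + b) v = (gaussianReal m v).withDensity
      (fun t => ENNReal.ofReal (exp ((b * (t - m) - b ^ 2 / 2) / v))) := by
  rw [gaussianReal_of_var_ne_zero _ hv, gaussianReal_of_var_ne_zero _ hv,
    ← withDensity_mul _ (measurable_gaussianPDF _ _) (by fun_prop)]
  congr 1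
  ext t
  rw [Pi.mul_apply, gaussianPDF, gaussianPDF, ← ENNReal.ofReal_mul (gaussianPDFReal_nonneg _ _ _),
    gaussianPDFReal, gaussianPDFReal, mul_assoc _ (rexp _), ← exp_add]
  congr 3
  have : (v : ℝ) ≠ 0 := by exact_mod_cast hv
  field_simp
  ring

lemma gaussianReal_map_affine (m s : ℝ) :
    (gaussianReal 0 1).map (fun t => m + s * t) = gaussianReal m (.mk (s ^ 2) (sq_nonneg s)) := by
  calc (gaussianReal 0 1).map (fun t => m + s * t)
      = ((gaussianReal 0 1).map (s * ·)).map (m + ·) := by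
        rw [Measure.map_map (measurable_const_add m) (measurable_const_mul s)]
        rfl
    _ = _ := by
        rw [gaussianReal_map_const_mul, gaussianReal_map_const_add, mul_zero, zero_add, mul_one]

section StdGaussian

variable {E : Type*} [NormedAddCommGroup E] [InnerProductSpace ℝ E] [FiniteDimensional ℝ E]
  [MeasurableSpace E] [BorelSpace E]

lemma stdGaussian_map_inner (u : E) :
    (stdGaussian E).map (⟪u, ·⟫) = (gaussianReal 0 1).map (‖u‖ * ·) := by
  have h := IsGaussian.map_eq_gaussianReal (μ := stdGaussian E) (innerSL ℝ u)
  rw [integral_strongDual_stdGaussian, variance_dual_stdGaussian, innerSL_apply_norm] at h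
  rw [gaussianReal_map_const_mul, mul_zero, mul_one, ← Real.toNNReal_of_nonneg (sq_nonneg _), ← h]
  rfl

lemma stdGaussian_setOf_inner_le (u : E) (hu : u ≠ 0) (t : ℝ) :
    stdGaussian E {z | ⟪u, z⟫ ≤ ‖u‖ * t} = ENNReal.ofReal (stdNormalCDF t) := by
  have hIic : (‖u‖ * ·) ⁻¹' Iic (‖u‖ * t) = Iic t := by
    ext s
    exact mul_le_mul_iff_of_pos_left (norm_pos_iff.2 hu)
  calc stdGaussian E {z | ⟪u, z⟫ ≤ ‖u‖ * t}
      = (stdGaussian E).map (⟪u, ·⟫) (Iic (‖u‖ * t)) :=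
        (Measure.map_apply (f := (⟪u, ·⟫)) (by fun_prop) measurableSet_Iic).symm
    _ = gaussianReal 0 1 (Iic t) := by
        rw [stdGaussian_map_inner, Measure.map_apply (by fun_prop) measurableSet_Iic, hIic]
    _ = ENNReal.ofReal (stdNormalCDF t) := (ENNReal.ofReal_toReal (measure_ne_top _ _)).symm

end StdGaussian

lemma stdGaussian_map_add_eq_withDensity {ι : Type*} [Fintype ι] (u : EuclideanSpace ℝ ι) :
    (stdGaussian (EuclideanSpace ℝ ι)).map (· + u) =
      (stdGaussian _).withDensity (fun z => ENNReal.ofReal (exp (⟪u, z⟫ - ‖u‖ ^ 2 / 2))) := by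
  let P : Measure (ι → ℝ) := Measure.pi fun _ => gaussianReal 0 1
  have hshift : P.map (· + WithLp.ofLp u) = Measure.pi fun i => gaussianReal (u i) 1 :=
    (measurePreserving_pi _ _ fun i =>
      ⟨measurable_add_const _, by rw [gaussianReal_map_add_const, zero_add]⟩).map_eq
  have htilt : Measure.pi (fun i => gaussianReal (u i) 1) = P.withDensity
      ((fun z => ENNReal.ofReal (exp (⟪u, z⟫ - ‖u‖ ^ 2 / 2))) ∘
        MeasurableEquiv.toLp 2 (ι → ℝ)) := by
    rw [Measure.pi_eq_withDensity_prod _ _ (fun i t => ENNReal.ofReal (exp (u i * t - u i ^ 2 / 2)))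
      (fun i => by fun_prop)
      fun i => by simpa using gaussianReal_add_eq_withDensity 0 (u i) one_ne_zero]
    congr 1
    funext z
    rw [← ENNReal.ofReal_prod_of_nonneg fun i _ => (exp_pos _).le, ← exp_sum]
    simp only [Function.comp_apply, MeasurableEquiv.coe_toLp, PiLp.inner_apply,
      EuclideanSpace.real_norm_sq_eq, Finset.sum_sub_distrib, Finset.sum_div]
    congr 3
    simp [mul_comm]
  rw [← map_pi_eq_stdGaussian, Measure.map_map (by fun_prop) (by fun_prop)]
  have hcomm : (· + u) ∘ WithLp.toLp 2 = WithLp.toLp 2 ∘ (· + WithLp.ofLp u) := by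
    funext z
    rfl
  rw [hcomm, ← Measure.map_map (by fun_prop) (by fun_prop), hshift, htilt]
  exact MeasurableEquiv.map_withDensity_comp (MeasurableEquiv.toLp 2 (ι → ℝ)) _ _

theorem stdNormalCDF_sub_norm_le_stdGaussian_map_add {ι : Type*} [Fintype ι]
    (u : EuclideanSpace ℝ ι) {B : Set (EuclideanSpace ℝ ι)} (hB : MeasurableSet B) {a : ℝ}
    (hBa : ENNReal.ofReal (stdNormalCDF a) ≤ stdGaussian _ B) :
    ENNReal.ofReal (stdNormalCDF (a - ‖u‖)) ≤ (stdGaussian _).map (· + u) B := by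
  rcases eq_or_ne u 0 with rfl | hu
  · simpa using hBa
  let H := {z : EuclideanSpace ℝ ι | ⟪u, z⟫ ≤ ‖u‖ * a}
  have hH : MeasurableSet H := measurableSet_le (by fun_prop) (by fun_prop)
  have hshifted : (stdGaussian _).map (· + u) H = ENNReal.ofReal (stdNormalCDF (a - ‖u‖)) := by
    rw [Measure.map_apply (by fun_prop) hH, ← stdGaussian_setOf_inner_le u hu]
    congr 1
    ext z
    simp only [H, mem_preimage, mem_ofPred_eq, inner_add_right, real_inner_self_eq_norm_sq]
    constructor <;> intro h <;> linarith
  rw [← hshifted, stdGaussian_map_add_eq_withDensity]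
  refine withDensity_apply_le_of_density_threshold _ hH hB
    (k := ENNReal.ofReal (exp (‖u‖ * a - ‖u‖ ^ 2 / 2))) (fun z hz => ?_) (fun z hz => ?_)
    (by rwa [stdGaussian_setOf_inner_le u hu])
  · simp only [H, mem_ofPred_eq] at hz
    exact ENNReal.ofReal_le_ofReal (exp_le_exp.2 (by linarith))
  · simp only [H, mem_ofPred_eq, not_le] at hz
    exact ENNReal.ofReal_le_ofReal (exp_le_exp.2 (by linarith))

lemma gaussPi_eq_map_stdGaussian (d : ℕ) (σ : ℝ) (x : EuclideanSpace ℝ (Fin d)) :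
    gaussPi d σ x = (stdGaussian _).map (fun z => x + σ • z) := by
  have hpi : (Measure.pi fun _ : Fin d => gaussianReal 0 1).map (fun w i => x i + σ * w i) =
      Measure.pi fun i => gaussianReal (x i) (.mk (σ ^ 2) (sq_nonneg σ)) :=
    (measurePreserving_pi _ _ fun i => ⟨by fun_prop, gaussianReal_map_affine (x i) σ⟩).map_eq
  calc gaussPi d σ x
      = (Measure.pi fun i => gaussianReal (x i) (.mk (σ ^ 2) (sq_nonneg σ))).map (WithLp.toLp 2) :=
        rfl
    _ = _ := by
      rw [← hpi, ← map_pi_eq_stdGaussian, Measure.map_map (by fun_prop) (by fun_prop),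
        Measure.map_map (by fun_prop) (by fun_prop)]
      rfl

lemma gaussPi_add_eq_map (d : ℕ) {σ : ℝ} (hσ : σ ≠ 0) (x δ : EuclideanSpace ℝ (Fin d)) :
    gaussPi d σ (x + δ) = ((stdGaussian _).map (· + σ⁻¹ • δ)).map (fun z => x + σ • z) := by
  rw [gaussPi_eq_map_stdGaussian, Measure.map_map (by fun_prop) (by fun_prop)]
  congr 1
  funext z
  simp [smul_add, smul_smul, hσ, add_assoc, add_comm δ]

instance (d : ℕ) (σ : ℝ) (x : EuclideanSpace ℝ (Fin d)) : IsProbabilityMeasure (gaussPi d σ x) := by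
  rw [gaussPi_eq_map_stdGaussian]
  exact Measure.isProbabilityMeasure_map (by fun_prop)

theorem randomized_smoothing_binary_certificate_general
    (d m : ℕ)
    (F : EuclideanSpace ℝ (Fin d) → Fin m) (hF : Measurable F)
    (σ : ℝ) (hσ : 0 < σ)
    (x : EuclideanSpace ℝ (Fin d)) (cA : Fin m)
    (pA : ℝ)
    (a : ℝ) (ha : stdNormalCDF a = pA)
    (hA : (gaussPi d σ x {z | F z = cA}).toReal ≥ pA) :
    ∀ δ : EuclideanSpace ℝ (Fin d), ‖δ‖ < σ * a →
      (gaussPi d σ (x + δ) {z | F z = cA}).toReal > 1 / 2 ∧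
      ∀ c : Fin m, c ≠ cA →
        gaussPi d σ (x + δ) {z | F z = c} < gaussPi d σ (x + δ) {z | F z = cA} := by
  intro δ hδ
  have hAmeas : MeasurableSet {z | F z = cA} := hF (measurableSet_singleton cA)
  have hBmeas : MeasurableSet ((fun z => x + σ • z) ⁻¹' {z | F z = cA}) :=
    (by fun_prop : Measurable fun z : EuclideanSpace ℝ (Fin d) => x + σ • z) hAmeas
  have hBa : ENNReal.ofReal (stdNormalCDF a) ≤
      stdGaussian _ ((fun z => x + σ • z) ⁻¹' {z | F z = cA}) := by
    rw [← Measure.map_apply (by fun_prop) hAmeas, ← gaussPi_eq_map_stdGaussian]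
    exact ENNReal.ofReal_le_of_le_toReal (ha ▸ hA)
  have hshift := stdNormalCDF_sub_norm_le_stdGaussian_map_add (σ⁻¹ • δ) hBmeas hBa
  rw [← Measure.map_apply (by fun_prop) hAmeas, ← gaussPi_add_eq_map d hσ.ne'] at hshift
  have hmargin : 0 < a - ‖σ⁻¹ • δ‖ := by
    rw [norm_smul, norm_inv, Real.norm_of_nonneg hσ.le, inv_mul_eq_div, sub_pos, div_lt_iff₀' hσ]
    exact hδ
  have hhalf : 1 / 2 < (gaussPi d σ (x + δ) {z | F z = cA}).toReal :=
    (half_lt_stdNormalCDF hmargin).trans_le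
      ((ENNReal.ofReal_le_iff_le_toReal (measure_ne_top _ _)).1 hshift)
  exact ⟨hhalf, fun c hc => measure_lt_of_subset_compl_of_half_lt hAmeas
    (fun z hz => by simp_all) hhalf⟩

theorem randomized_smoothing_binary_certificate
    (d m : ℕ) (hd : 0 < d) (hm : 0 < m)
    (F : EuclideanSpace ℝ (Fin d) → Fin m) (hF : Measurable F)
    (σ : ℝ) (hσ : 0 < σ)
    (x : EuclideanSpace ℝ (Fin d)) (cA : Fin m)
    (pA : ℝ) (hpA : pA ∈ Set.Ioc (1 / 2 : ℝ) 1)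
    (a : ℝ) (ha : stdNormalCDF a = pA)
    (hA : (gaussPi d σ x {z | F z = cA}).toReal ≥ pA) :
    ∀ δ : EuclideanSpace ℝ (Fin d), ‖δ‖ < σ * a →
      (gaussPi d σ (x + δ) {z | F z = cA}).toReal > 1 / 2 ∧
      ∀ c : Fin m, c ≠ cA →
        gaussPi d σ (x + δ) {z | F z = c} < gaussPi d σ (x + δ) {z | F z = cA} :=
  randomized_smoothing_binary_certificate_general d m F hF σ hσ x cA pA a ha hA
end

section
/- Let μ and ν be probability measures on a measurable space Ω with ν absolutely continuous with respect to μ, and let g be the Radon–Nikodym derivative dν/dμ. Fix t ∈ ℝ≥0 and set S = {z ∈ Ω | g z ≤ t}. Then for every measurable set A ⊆ Ω with μ(A) ≥ μ(S), one has ν(A) ≥ ν(S). -/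
open MeasureTheory Set
open scoped NNReal ENNReal

theorem neyman_pearson_sublevel_minimizes
    {Ω : Type*} [MeasurableSpace Ω]
    (μ ν : Measure Ω) [IsProbabilityMeasure μ] [IsProbabilityMeasure ν]
    (hac : ν ≪ μ) (t : ℝ≥0)
    (A : Set Ω) (hA : MeasurableSet A)
    (h : μ A ≥ μ {z | ν.rnDeriv μ z ≤ (t : ℝ≥0∞)}) :
    ν A ≥ ν {z | ν.rnDeriv μ z ≤ (t : ℝ≥0∞)} := by
  set g := ν.rnDeriv μ with hg
  set S : Set Ω := {z | g z ≤ (t : ℝ≥0∞)} with hS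
  have hgmeas : Measurable g := Measure.measurable_rnDeriv ν μ
  have hSmeas : MeasurableSet S := hgmeas measurableSet_Iic
  have hν_eq : μ.withDensity g = ν := Measure.withDensity_rnDeriv_eq ν μ hac
  have hνset : ∀ B : Set Ω, MeasurableSet B → ν B = ∫⁻ z in B, g z ∂μ := by
    intro B hB
    rw [← hν_eq, withDensity_apply _ hB]
  -- split sets
  have hSsplit : ν S = ν (S ∩ A) + ν (S \ A) := by
    rw [← measure_inter_add_diff S hA]
  have hAsplit : ν A = ν (A ∩ S) + ν (A \ S) := by
    rw [← measure_inter_add_diff A hSmeas]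
  have hμSsplit : μ S = μ (S ∩ A) + μ (S \ A) := by
    rw [← measure_inter_add_diff S hA]
  have hμAsplit : μ A = μ (A ∩ S) + μ (A \ S) := by
    rw [← measure_inter_add_diff A hSmeas]
  have hcomm : S ∩ A = A ∩ S := inter_comm S A
  -- μ (S \ A) ≤ μ (A \ S)
  have hμdiff : μ (S \ A) ≤ μ (A \ S) := by
    have h1 : μ (S ∩ A) + μ (S \ A) ≤ μ (A ∩ S) + μ (A \ S) := by
      rw [← hμSsplit, ← hμAsplit]; exact h
    rw [hcomm] at h1
    exact ENNReal.add_le_add_iff_left (measure_ne_top μ (A ∩ S)) |>.mp h1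
  -- ν (S \ A) ≤ t * μ (S \ A)
  have h1 : ν (S \ A) ≤ (t : ℝ≥0∞) * μ (S \ A) := by
    rw [hνset _ (hSmeas.diff hA)]
    calc ∫⁻ z in S \ A, g z ∂μ ≤ ∫⁻ _ in S \ A, (t : ℝ≥0∞) ∂μ := by
          apply setLIntegral_mono' (hSmeas.diff hA)
          intro z hz; exact hz.1
      _ = (t : ℝ≥0∞) * μ (S \ A) := by
          rw [setLIntegral_const]
  -- t * μ (A \ S) ≤ ν (A \ S)
  have h2 : (t : ℝ≥0∞) * μ (A \ S) ≤ ν (A \ S) := by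
    rw [hνset _ (hA.diff hSmeas)]
    calc (t : ℝ≥0∞) * μ (A \ S) = ∫⁻ _ in A \ S, (t : ℝ≥0∞) ∂μ := by
          rw [setLIntegral_const]
      _ ≤ ∫⁻ z in A \ S, g z ∂μ := by
          apply setLIntegral_mono' (hA.diff hSmeas)
          intro z hz
          exact le_of_lt (lt_of_not_ge hz.2)
  have key : ν (S \ A) ≤ ν (A \ S) :=
    h1.trans ((mul_le_mul_right hμdiff _).trans h2)
  rw [ge_iff_le, hSsplit, hAsplit, hcomm]
  exact add_le_add le_rfl key
end

section
/- Let n ∈ ℕ, α ∈ [0,1], and p ∈ [0, 1/2]. Let K be distributed as Binom(n,p) and define pv : ℕ → ℝ by pv(k) = ∑_{j=k}^{n} (n choose j) (1/2)^n (the probability that a Binom(n,1/2) variable is at least k). Then the probability under K ~ Binom(n,p) of the event {pv(K) ≤ α} is at most α: ∑_{k : pv(k) ≤ α} (n choose k) p^k (1−p)^{n−k} ≤ α. -/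
open Finset

noncomputable def binTail (n k : ℕ) (p : ℝ) : ℝ :=
  ∑ j ∈ Finset.Icc k n, (n.choose j : ℝ) * p ^ j * (1 - p) ^ (n - j)

lemma binTail_zero (n : ℕ) (p : ℝ) : binTail n 0 p = 1 := by
  have h := add_pow p (1 - p) n
  simp only [add_sub_cancel, one_pow] at h
  rw [binTail]
  have heq : Finset.Icc 0 n = Finset.range (n + 1) := by
    ext x; simp [Nat.lt_succ_iff]
  rw [heq]
  calc ∑ j ∈ Finset.range (n + 1), (n.choose j : ℝ) * p ^ j * (1 - p) ^ (n - j)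
      = ∑ m ∈ Finset.range (n + 1), p ^ m * (1 - p) ^ (n - m) * (n.choose m : ℝ) := by
        apply Finset.sum_congr rfl; intro j _; ring
    _ = 1 := h.symm

lemma binTail_succ_succ (n k : ℕ) (p : ℝ) :
    binTail (n + 1) (k + 1) p = p * binTail n k p + (1 - p) * binTail n (k + 1) p := by
  rcases Nat.lt_or_ge n k with hnk | hnk
  · have e1 : Finset.Icc (k + 1) (n + 1) = ∅ := by rw [Finset.Icc_eq_empty_iff]; omega
    have e2 : Finset.Icc k n = ∅ := by rw [Finset.Icc_eq_empty_iff]; omega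
    have e3 : Finset.Icc (k + 1) n = ∅ := by rw [Finset.Icc_eq_empty_iff]; omega
    simp [binTail, e1, e2, e3]
  have hmap : Finset.Icc (k + 1) (n + 1) = (Finset.Icc k n).map ⟨Nat.succ, Nat.succ_injective⟩ := by
    ext x
    simp only [Finset.mem_map, Finset.mem_Icc, Function.Embedding.coeFn_mk]
    constructor
    · rintro ⟨h1, h2⟩
      obtain ⟨y, rfl⟩ := Nat.exists_eq_add_of_le h1
      exact ⟨k + y, ⟨Nat.le_add_right _ _, by omega⟩, by omega⟩
    · rintro ⟨y, ⟨h1, h2⟩, rfl⟩; omega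
  rw [binTail, hmap, Finset.sum_map]
  simp only [Function.Embedding.coeFn_mk]
  have key : ∀ j ∈ Finset.Icc k n,
      ((n + 1).choose (Nat.succ j) : ℝ) * p ^ (Nat.succ j) * (1 - p) ^ (n + 1 - Nat.succ j)
      = p * ((n.choose j : ℝ) * p ^ j * (1 - p) ^ (n - j))
        + ((n.choose (j + 1) : ℝ) * p ^ (j + 1) * (1 - p) ^ (n - j)) := by
    intro j hj
    rw [Nat.choose_succ_succ]
    have h2 : n + 1 - Nat.succ j = n - j := by omega
    rw [h2]
    push_cast [Nat.succ_eq_add_one]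
    ring
  rw [Finset.sum_congr rfl key, Finset.sum_add_distrib]
  have hA : ∑ x ∈ Finset.Icc k n, p * ((n.choose x : ℝ) * p ^ x * (1 - p) ^ (n - x))
      = p * binTail n k p := by
    rw [binTail, Finset.mul_sum]
  have hB : ∑ x ∈ Finset.Icc k n, ((n.choose (x + 1) : ℝ) * p ^ (x + 1) * (1 - p) ^ (n - x))
      = (1 - p) * binTail n (k + 1) p := by
    have htop : ∑ i ∈ Finset.Icc (k + 1) (n + 1), (1 - p) * ((n.choose i : ℝ) * p ^ i * (1 - p) ^ (n - i))
        = ∑ i ∈ Finset.Icc (k + 1) n, (1 - p) * ((n.choose i : ℝ) * p ^ i * (1 - p) ^ (n - i)) := by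
      rw [Finset.sum_Icc_succ_top (by omega : k + 1 ≤ n + 1)]
      simp [Nat.choose_succ_self]
    rw [binTail, Finset.mul_sum, ← htop, hmap, Finset.sum_map]
    apply Finset.sum_congr rfl
    intro j hj
    simp only [Function.Embedding.coeFn_mk, Nat.succ_eq_add_one]
    rcases Nat.lt_or_ge j n with h | h
    · have h3 : n - j = (n - (j + 1)) + 1 := by omega
      rw [h3]
      ring
    · simp only [Finset.mem_Icc] at hj
      have hjn : j = n := by omega
      subst hjn
      simp [Nat.choose_succ_self]
  rw [hA, hB]

lemma binTail_nonneg (n k : ℕ) {p : ℝ} (h0 : 0 ≤ p) (h1 : p ≤ 1) :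
    0 ≤ binTail n k p := by
  apply Finset.sum_nonneg
  intro j hj
  have : (0:ℝ) ≤ 1 - p := by linarith
  positivity

lemma binTail_antitone_k (n k : ℕ) {p : ℝ} (h0 : 0 ≤ p) (h1 : p ≤ 1) :
    binTail n (k + 1) p ≤ binTail n k p := by
  apply Finset.sum_le_sum_of_subset_of_nonneg
  · apply Finset.Icc_subset_Icc_left; omega
  · intro j _ _
    have : (0:ℝ) ≤ 1 - p := by linarith
    positivity

lemma binTail_mono_p (n : ℕ) : ∀ (k : ℕ) {p q : ℝ}, 0 ≤ p → p ≤ q → q ≤ 1 →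
    binTail n k p ≤ binTail n k q := by
  induction n with
  | zero =>
    intro k p q h0 hpq h1
    rcases Nat.eq_zero_or_pos k with rfl | hk
    · rw [binTail_zero, binTail_zero]
    · have : Finset.Icc k 0 = ∅ := by
        rw [Finset.Icc_eq_empty_iff]; omega
      simp [binTail, this]
  | succ n ih =>
    intro k p q h0 hpq h1
    rcases Nat.eq_zero_or_pos k with rfl | hk
    · rw [binTail_zero, binTail_zero]
    · obtain ⟨k, rfl⟩ := Nat.exists_eq_succ_of_ne_zero (by omega : k ≠ 0)
      rw [binTail_succ_succ, binTail_succ_succ]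
      have hq0 : 0 ≤ q := le_trans h0 hpq
      have hp1 : p ≤ 1 := le_trans hpq h1
      have ha : binTail n k p ≤ binTail n k q := ih k h0 hpq h1
      have hb : binTail n (k + 1) p ≤ binTail n (k + 1) q := ih (k + 1) h0 hpq h1
      have hc : binTail n (k + 1) q ≤ binTail n k q := binTail_antitone_k n k hq0 h1
      nlinarith [binTail_nonneg n k (le_trans h0 hpq) h1,
                 binTail_nonneg n (k+1) h0 hp1]

theorem binomial_test_type_I_error
    (n : ℕ) (α : ℝ) (hα : α ∈ Set.Icc (0 : ℝ) 1)
    (p : ℝ) (hp : p ∈ Set.Icc (0 : ℝ) (1 / 2))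
    (pv : ℕ → ℝ)
    (hpv : ∀ k, pv k = ∑ j ∈ Finset.Icc k n, (n.choose j : ℝ) * (1 / 2 : ℝ) ^ n) :
    ∑ k ∈ (Finset.range (n + 1)).filter (fun k => pv k ≤ α),
        (n.choose k : ℝ) * p ^ k * (1 - p) ^ (n - k) ≤ α := by
  obtain ⟨hp0, hp2⟩ := hp
  obtain ⟨hα0, hα1⟩ := hα
  have hp1 : p ≤ 1 := by linarith
  set E := (Finset.range (n + 1)).filter (fun k => pv k ≤ α) with hE
  rcases Finset.eq_empty_or_nonempty E with h | h
  · rw [h]; simpa using hα0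
  · set k₀ := E.min' h with hk₀
    have hk₀E : k₀ ∈ E := Finset.min'_mem E h
    have hk₀n : k₀ ≤ n := by
      have := (Finset.mem_filter.mp hk₀E).1
      simp only [Finset.mem_range] at this; omega
    have hpvk₀ : pv k₀ ≤ α := (Finset.mem_filter.mp hk₀E).2
    have hsub : E ⊆ Finset.Icc k₀ n := by
      intro x hx
      simp only [Finset.mem_Icc]
      refine ⟨Finset.min'_le E x hx, ?_⟩
      have := (Finset.mem_filter.mp hx).1
      simp only [Finset.mem_range] at this; omega
    have step1 : ∑ k ∈ E, (n.choose k : ℝ) * p ^ k * (1 - p) ^ (n - k)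
        ≤ binTail n k₀ p := by
      apply Finset.sum_le_sum_of_subset_of_nonneg hsub
      intro j _ _
      have : (0:ℝ) ≤ 1 - p := by linarith
      positivity
    have step2 : binTail n k₀ p ≤ binTail n k₀ (1/2) :=
      binTail_mono_p n k₀ hp0 hp2 (by norm_num)
    have step3 : binTail n k₀ (1/2) = pv k₀ := by
      rw [hpv, binTail]
      apply Finset.sum_congr rfl
      intro j hj
      simp only [Finset.mem_Icc] at hj
      have : (1/2 : ℝ) ^ j * (1 - 1/2) ^ (n - j) = (1/2) ^ n := by
        norm_num
        rw [← pow_add]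
        congr 1; omega
      rw [mul_assoc, this]
    calc ∑ k ∈ E, (n.choose k : ℝ) * p ^ k * (1 - p) ^ (n - k)
        ≤ binTail n k₀ p := step1
      _ ≤ binTail n k₀ (1/2) := step2
      _ = pv k₀ := step3
      _ ≤ α := hpvk₀
end
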